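/- Fix reals μ > 0, k > 0, η > 0, and d, Δd with 0 ≤ d ≤ 1 and Δd ≥ 0, set g(d) := (1−d)² + η, and let ε, Δε be symmetric real 3×3 matrices with tr ε > 0. Define Δσ := g(d)[2μ Δε^dev + k (tr Δε) I] − 2(1−d)[2μ ε^dev + k (tr ε) I] Δd, and assume tr Δσ = 0, Δσ · ε^dev = 0 and Δσ · Δε = 0. Then the active strain energy Ψ⁺(e) := μ (e^dev · e^dev) + (k/2) ⟨tr e⟩₊² is monotone under the fixed-stress update: Ψ⁺(ε + Δε) ≥ Ψ⁺(ε). -/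

import Mathlib

open Matrix

/-- Deviatoric part of a 3×3 real matrix. -/
noncomputable def dev (A : Matrix (Fin 3) (Fin 3) ℝ) : Matrix (Fin 3) (Fin 3) ℝ :=
  A - (A.trace / 3) • (1 : Matrix (Fin 3) (Fin 3) ℝ)

/-- Frobenius inner product of 3×3 real matrices. -/
noncomputable def frob (A B : Matrix (Fin 3) (Fin 3) ℝ) : ℝ := (Aᵀ * B).trace

/-- Active strain energy of the volumetric–deviatoric split. -/
noncomputable def activeEnergy (μ k : ℝ) (e : Matrix (Fin 3) (Fin 3) ℝ) : ℝ :=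
  μ * frob (dev e) (dev e) + k / 2 * (max e.trace 0) ^ 2

/-!
Write `Δσ = g σ(Δε) - c σ(ε)` with `σ(e) = 2μ e^dev + k (tr e) I`, `g = (1-d)² + η > 0` and
`c = 2(1-d)Δd ≥ 0`. Since `e^dev` is traceless, `tr Δσ = 0` reads `g tr Δε = c tr ε` and
`Δσ · ε^dev = 0` reads `g (ε^dev · Δε^dev) = c (ε^dev · ε^dev)`; hence `tr Δε ≥ 0` and
`ε^dev · Δε^dev ≥ 0`. Then every term of
`Ψ⁺(ε + Δε) - Ψ⁺(ε) = μ (2 ε^dev · Δε^dev + Δε^dev · Δε^dev) + (k/2) (2 tr ε tr Δε + (tr Δε)²)`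
is nonnegative.
-/

section Frobenius

variable (A B C : Matrix (Fin 3) (Fin 3) ℝ)

lemma frob_comm : frob A B = frob B A := by
  rw [frob, ← trace_transpose, transpose_mul, transpose_transpose, frob]

lemma frob_self_nonneg : 0 ≤ frob A A := by
  simpa [frob, conjTranspose_eq_transpose_of_trivial] using
    (posSemidef_conjTranspose_mul_self A).trace_nonneg

lemma frob_add_left : frob (A + B) C = frob A C + frob B C := by
  simp [frob, transpose_add, add_mul]

lemma frob_add_right : frob A (B + C) = frob A B + frob A C := by
  simp [frob, mul_add]

lemma frob_sub_left : frob (A - B) C = frob A C - frob B C := by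
  simp [frob, transpose_sub, sub_mul]

lemma frob_smul_left (r : ℝ) : frob (r • A) B = r * frob A B := by
  simp [frob, transpose_smul]

lemma frob_one_left : frob 1 A = A.trace := by
  simp [frob]

end Frobenius

lemma trace_dev (A : Matrix (Fin 3) (Fin 3) ℝ) : (dev A).trace = 0 := by
  simp [dev, trace_smul, trace_one]

lemma dev_add (A B : Matrix (Fin 3) (Fin 3) ℝ) : dev (A + B) = dev A + dev B := by
  simp only [dev, trace_add, add_div, add_smul]
  abel

lemma frob_dev_add_self (A B : Matrix (Fin 3) (Fin 3) ℝ) :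
    frob (dev (A + B)) (dev (A + B)) =
      frob (dev A) (dev A) + 2 * frob (dev A) (dev B) + frob (dev B) (dev B) := by
  rw [dev_add, frob_add_left, frob_add_right, frob_add_right, frob_comm (dev B) (dev A)]
  ring

noncomputable def elasticStress (μ k : ℝ) (e : Matrix (Fin 3) (Fin 3) ℝ) :
    Matrix (Fin 3) (Fin 3) ℝ :=
  (2 * μ) • dev e + (k * e.trace) • 1

lemma trace_elasticStress (μ k : ℝ) (e : Matrix (Fin 3) (Fin 3) ℝ) :
    (elasticStress μ k e).trace = 3 * k * e.trace := by
  simp only [elasticStress, trace_add, trace_smul, trace_dev, smul_eq_mul, mul_zero, trace_one,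
    Fintype.card_fin, Nat.cast_ofNat, zero_add]
  ring

lemma frob_elasticStress_dev (μ k : ℝ) (e A : Matrix (Fin 3) (Fin 3) ℝ) :
    frob (elasticStress μ k e) (dev A) = 2 * μ * frob (dev e) (dev A) := by
  simp [elasticStress, frob_add_left, frob_smul_left, frob_one_left, trace_dev]

lemma activeEnergy_le_add {μ k : ℝ} (hμ : 0 ≤ μ) (hk : 0 ≤ k) {e Δe : Matrix (Fin 3) (Fin 3) ℝ}
    (he : 0 ≤ e.trace) (hΔe : 0 ≤ Δe.trace) (hdev : 0 ≤ frob (dev e) (dev Δe)) :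
    activeEnergy μ k e ≤ activeEnergy μ k (e + Δe) := by
  have hR := frob_self_nonneg (dev Δe)
  rw [activeEnergy, activeEnergy, frob_dev_add_self, trace_add, max_eq_left he,
    max_eq_left (add_nonneg he hΔe)]
  nlinarith [mul_nonneg hμ hdev, mul_nonneg hμ hR, mul_nonneg hk (mul_nonneg he hΔe),
    mul_nonneg hk (sq_nonneg Δe.trace)]

theorem fixed_stress_energy_monotone_general
    (μ k η d Δd : ℝ) (hμ : 0 < μ) (hk : 0 < k) (hη : 0 < η)
    (hd1 : d ≤ 1) (hΔd : 0 ≤ Δd)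
    (ε Δε : Matrix (Fin 3) (Fin 3) ℝ)
    (htr : 0 < ε.trace)
    (Δσ : Matrix (Fin 3) (Fin 3) ℝ)
    (hΔσ : Δσ = ((1 - d) ^ 2 + η) •
        ((2 * μ) • dev Δε + (k * Δε.trace) • (1 : Matrix (Fin 3) (Fin 3) ℝ))
      - (2 * (1 - d) * Δd) •
        ((2 * μ) • dev ε + (k * ε.trace) • (1 : Matrix (Fin 3) (Fin 3) ℝ)))
    (h0 : Δσ.trace = 0) (h1 : frob Δσ (dev ε) = 0) :
    activeEnergy μ k ε ≤ activeEnergy μ k (ε + Δε) := by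
  set g := (1 - d) ^ 2 + η
  set c := 2 * (1 - d) * Δd
  have hg : 0 < g := by positivity
  have hc : 0 ≤ c := mul_nonneg (mul_nonneg zero_le_two (sub_nonneg.2 hd1)) hΔd
  change Δσ = g • elasticStress μ k Δε - c • elasticStress μ k ε at hΔσ
  subst hΔσ
  have htrace : g * Δε.trace = c * ε.trace := by
    simp only [trace_sub, trace_smul, trace_elasticStress, smul_eq_mul] at h0
    nlinarith
  have hdev : g * frob (dev ε) (dev Δε) = c * frob (dev ε) (dev ε) := by
    rw [frob_sub_left, frob_smul_left, frob_smul_left, frob_elasticStress_dev,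
      frob_elasticStress_dev, frob_comm (dev Δε)] at h1
    nlinarith
  refine activeEnergy_le_add hμ.le hk.le htr.le ?_ ?_
  · exact nonneg_of_mul_nonneg_right (htrace ▸ mul_nonneg hc htr.le) hg
  · exact nonneg_of_mul_nonneg_right (hdev ▸ mul_nonneg hc (frob_self_nonneg _)) hg

theorem fixed_stress_energy_monotone
    (μ k η d Δd : ℝ) (hμ : 0 < μ) (hk : 0 < k) (hη : 0 < η)
    (hd0 : 0 ≤ d) (hd1 : d ≤ 1) (hΔd : 0 ≤ Δd)
    (ε Δε : Matrix (Fin 3) (Fin 3) ℝ) (hε : ε.IsSymm) (hΔε : Δε.IsSymm)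
    (htr : 0 < ε.trace)
    (Δσ : Matrix (Fin 3) (Fin 3) ℝ)
    (hΔσ : Δσ = ((1 - d) ^ 2 + η) •
        ((2 * μ) • dev Δε + (k * Δε.trace) • (1 : Matrix (Fin 3) (Fin 3) ℝ))
      - (2 * (1 - d) * Δd) •
        ((2 * μ) • dev ε + (k * ε.trace) • (1 : Matrix (Fin 3) (Fin 3) ℝ)))
    (h0 : Δσ.trace = 0) (h1 : frob Δσ (dev ε) = 0) (h2 : frob Δσ Δε = 0) :
    activeEnergy μ k ε ≤ activeEnergy μ k (ε + Δε) :=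
  fixed_stress_energy_monotone_general μ k η d Δd hμ hk hη hd1 hΔd ε Δε htr Δσ hΔσ h0 h1
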